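/- For the n×n symmetric tridiagonal Toeplitz matrix T with diagonal -2 and off-diagonals 1, the inverse satisfies (T^{-1})_{ij} = -i(n-j+1)/(n+1) for i ≤ j and (T^{-1})_{ij} = -j(n-i+1)/(n+1) for i > j. -/

import Mathlib

/-- The n×n symmetric tridiagonal Toeplitz matrix with diagonal -2 and off-diagonal 1. -/
def Tmat (n : ℕ) : Matrix (Fin n) (Fin n) ℝ :=
  fun i j => if i = j then -2 else if Nat.dist i.1 j.1 = 1 then 1 else 0

/-!
`Tmat n` is the discrete Laplacian `g ↦ g (k - 1) - 2 g k + g (k + 1)` acting on functions on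
`{0, …, n - 1}` extended by zero to `-1` and `n`. The claimed inverse is its Green's function:
for fixed `b`, `a ↦ greenFun n a b` is affine on either side of `b`, vanishes at `a = -1` and
`a = n`, and its second difference is the unit impulse at `b`.
-/

open Matrix

noncomputable def greenFun (n : ℕ) (a b : ℤ) : ℝ :=
  if a ≤ b then -(((a : ℝ) + 1) * ((n : ℝ) - (b : ℝ))) / ((n : ℝ) + 1)
  else -(((b : ℝ) + 1) * ((n : ℝ) - (a : ℝ))) / ((n : ℝ) + 1)

lemma greenFun_second_difference (n : ℕ) (a b : ℤ) :
    greenFun n (a - 1) b - 2 * greenFun n a b + greenFun n (a + 1) b =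
      if a = b then 1 else 0 := by
  have hn : (n : ℝ) + 1 ≠ 0 := by positivity
  unfold greenFun
  obtain hab | rfl | rfl | hab : a < b ∨ a = b ∨ a = b + 1 ∨ b + 1 < a := by omega
  all_goals
    split_ifs <;> (try omega)
    all_goals field_simp; push_cast; ring

lemma greenFun_neg_one (n : ℕ) {b : ℤ} (hb : -1 ≤ b) : greenFun n (-1) b = 0 := by
  simp [greenFun, hb]

lemma greenFun_natCast_self (n : ℕ) {b : ℤ} (hb : b ≤ n) : greenFun n n b = 0 := by
  unfold greenFun
  split_ifs with h
  · rw [le_antisymm hb h]; simp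
  · simp

lemma Tmat_apply (n : ℕ) (i k : Fin n) :
    Tmat n i k = (if (k : ℤ) = i - 1 then 1 else 0) + -2 * (if (k : ℤ) = i then 1 else 0) +
      (if (k : ℤ) = i + 1 then 1 else 0) := by
  unfold Tmat
  split_ifs <;> simp only [Fin.ext_iff, Nat.dist] at * <;> norm_num <;> omega

lemma sum_fin_ite_intCast_eq {n : ℕ} {g : ℤ → ℝ} (hg₀ : g (-1) = 0) (hgn : g n = 0)
    {m : ℤ} (hm₀ : -1 ≤ m) (hmn : m ≤ n) :
    ∑ k : Fin n, (if (k : ℤ) = m then g k else 0) = g m := by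
  by_cases hm : 0 ≤ m ∧ m < n
  · rw [Fintype.sum_eq_single ⟨m.toNat, by omega⟩ fun k hk => if_neg ?_]
    · simp [Int.toNat_of_nonneg hm.1]
    · exact fun h => hk (Fin.ext (show (k : ℕ) = m.toNat by omega))
  · have hgm : g m = 0 := by
      obtain rfl | rfl : m = -1 ∨ m = n := by omega
      exacts [hg₀, hgn]
    rw [hgm]
    exact Finset.sum_eq_zero fun k _ => if_neg (by omega)

lemma Tmat_mulVec_apply {n : ℕ} {g : ℤ → ℝ} (hg₀ : g (-1) = 0) (hgn : g n = 0)
    (i : Fin n) :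
    (Tmat n *ᵥ fun k => g k) i = g (i - 1) - 2 * g i + g (i + 1) := by
  have hi := i.isLt
  simp only [mulVec, dotProduct, Tmat_apply, add_mul, mul_assoc, ite_mul, one_mul, zero_mul,
    Finset.sum_add_distrib, ← Finset.mul_sum]
  rw [sum_fin_ite_intCast_eq hg₀ hgn (by omega) (by omega),
    sum_fin_ite_intCast_eq hg₀ hgn (by omega) (by omega),
    sum_fin_ite_intCast_eq hg₀ hgn (by omega) (by omega)]
  ring

lemma Tmat_mul_greenFun (n : ℕ) : Tmat n * of (fun i j : Fin n => greenFun n i j) = 1 := by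
  ext i j
  have hj := j.isLt
  calc (Tmat n * of fun i j : Fin n => greenFun n i j) i j
      = (Tmat n *ᵥ fun k : Fin n => greenFun n k j) i := rfl
    _ = greenFun n (i - 1) j - 2 * greenFun n i j + greenFun n (i + 1) j :=
      Tmat_mulVec_apply (g := (greenFun n · j)) (greenFun_neg_one n (by omega))
        (greenFun_natCast_self n (by omega)) i
    _ = (1 : Matrix (Fin n) (Fin n) ℝ) i j := by
      rw [greenFun_second_difference, one_apply]
      simp [Fin.ext_iff]

/-- Indices are 0-based: entry `(i, j)` is the paper's `(i + 1, j + 1)`. -/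
theorem stmt1 (n : ℕ) (i j : Fin n) :
    (Tmat n)⁻¹ i j =
      if (i : ℕ) ≤ (j : ℕ) then
        -(((i : ℝ) + 1) * ((n : ℝ) - (j : ℝ))) / ((n : ℝ) + 1)
      else
        -(((j : ℝ) + 1) * ((n : ℝ) - (i : ℝ))) / ((n : ℝ) + 1) := by
  rw [inv_eq_right_inv (Tmat_mul_greenFun n)]
  simp [greenFun]
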